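/- Let m ≥ 3 be an integer. Then K_m(x,y) ≥ 0 for all x, y ∈ [0,π] with x ≠ y; moreover K_m(x,y) > 0 whenever x ∈ (0,π), y ∈ (0,π), y ≠ x and y ≠ π − x; and K_m(0,y) = K_m(π,y) = 0 for all y ∈ (0,π). -/

import Mathlib

/-- For an integer `m ≥ 3` and `x, y ∈ [0,π]` with `x ≠ y`, the kernel
`K_m(x,y) = (1/(2π))·log((1 − cos(x+y))/(1 − cos(x−y)))
  + (6/π)·∑_{k=1}^∞ sin(kx)·sin(ky)/(m²k³ − 4k)`. -/
noncomputable def Kker (m : ℕ) (x y : ℝ) : ℝ :=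
  1 / (2 * Real.pi) * Real.log ((1 - Real.cos (x + y)) / (1 - Real.cos (x - y))) +
    6 / Real.pi * ∑' k : ℕ,
      Real.sin (((k : ℝ) + 1) * x) * Real.sin (((k : ℝ) + 1) * y) /
        ((m : ℝ) ^ 2 * ((k : ℝ) + 1) ^ 3 - 4 * ((k : ℝ) + 1))

open Real Set Finset Filter

namespace KkerAux

noncomputable def Bc (m : ℕ) (k : ℕ) : ℝ := 1 / ((m : ℝ) ^ 2 * ((k : ℝ) + 1) ^ 2 - 4)

noncomputable def Cc (m : ℕ) (k : ℕ) : ℝ := Bc m k - 2 * Bc m (k + 1) + Bc m (k + 2)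

noncomputable def Fm (m : ℕ) (θ : ℝ) : ℝ :=
  -(1 / (2 * π)) * Real.log (1 - Real.cos θ) +
    3 / π * ∑' k : ℕ,
      Real.cos (((k : ℝ) + 1) * θ) / ((m : ℝ) ^ 2 * ((k : ℝ) + 1) ^ 3 - 4 * ((k : ℝ) + 1))

variable {m : ℕ}

lemma hM (hm : 3 ≤ m) : (9 : ℝ) ≤ (m : ℝ) ^ 2 := by
  have h3 : (3 : ℝ) ≤ (m : ℝ) := by exact_mod_cast hm
  nlinarith

lemma d2r_ge (hm : 3 ≤ m) {r : ℝ} (hr : 1 ≤ r) :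
    5 * r ^ 2 ≤ (m : ℝ) ^ 2 * r ^ 2 - 4 := by
  have h9 := hM hm
  nlinarith [sq_nonneg r]

lemma d2r_pos (hm : 3 ≤ m) {r : ℝ} (hr : 1 ≤ r) : 0 < (m : ℝ) ^ 2 * r ^ 2 - 4 := by
  have := d2r_ge hm hr
  nlinarith

lemma kr (k : ℕ) : (1 : ℝ) ≤ (k : ℝ) + 1 := by
  have : (0 : ℝ) ≤ (k : ℝ) := Nat.cast_nonneg k
  linarith

lemma d1_eq (m k : ℕ) :
    (m : ℝ) ^ 2 * ((k : ℝ) + 1) ^ 3 - 4 * ((k : ℝ) + 1)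
      = ((k : ℝ) + 1) * ((m : ℝ) ^ 2 * ((k : ℝ) + 1) ^ 2 - 4) := by ring

lemma d1_pos (hm : 3 ≤ m) (k : ℕ) :
    0 < (m : ℝ) ^ 2 * ((k : ℝ) + 1) ^ 3 - 4 * ((k : ℝ) + 1) := by
  rw [d1_eq]
  exact mul_pos (by positivity) (d2r_pos hm (kr k))

lemma d1_ge (hm : 3 ≤ m) (k : ℕ) :
    5 * ((k : ℝ) + 1) ^ 2 ≤ (m : ℝ) ^ 2 * ((k : ℝ) + 1) ^ 3 - 4 * ((k : ℝ) + 1) := by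
  rw [d1_eq]
  have h1 := d2r_ge hm (kr k)
  have h2 := kr k
  nlinarith [sq_nonneg ((k : ℝ) + 1)]

lemma Bc_pos (hm : 3 ≤ m) (k : ℕ) : 0 < Bc m k :=
  one_div_pos.mpr (d2r_pos hm (kr k))

lemma Bc_le (hm : 3 ≤ m) (k : ℕ) : Bc m k ≤ 1 / (5 * ((k : ℝ) + 1) ^ 2) :=
  one_div_le_one_div_of_le (by positivity) (d2r_ge hm (kr k))

lemma Bc_anti (hm : 3 ≤ m) (k : ℕ) : Bc m (k + 1) ≤ Bc m k := by
  unfold Bc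
  push_cast
  apply one_div_le_one_div_of_le (d2r_pos hm (kr k))
  have h9 := hM hm
  have := kr k
  nlinarith

lemma summable_invsq : Summable (fun k : ℕ => 1 / ((k : ℝ) + 1) ^ 2) := by
  have h := Real.summable_one_div_nat_pow.mpr (show 1 < 2 by norm_num)
  have h2 := (summable_nat_add_iff 1).mpr h
  exact h2.congr fun n => by push_cast; ring

lemma summable_bound {g : ℕ → ℝ} (c : ℝ) (h : ∀ k, |g k| ≤ c / ((k : ℝ) + 1) ^ 2) :
    Summable g := by
  have hg : Summable (fun k : ℕ => c / ((k : ℝ) + 1) ^ 2) :=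
    (summable_invsq.mul_left c).congr fun n => by ring
  exact Summable.of_norm_bounded hg (by simpa [Real.norm_eq_abs] using h)

lemma summable_Bc (hm : 3 ≤ m) : Summable (Bc m) := by
  apply summable_bound (1 / 5)
  intro k
  rw [abs_of_pos (Bc_pos hm k)]
  calc Bc m k ≤ 1 / (5 * ((k : ℝ) + 1) ^ 2) := Bc_le hm k
    _ = (1 / 5) / ((k : ℝ) + 1) ^ 2 := (div_div 1 5 _).symm

lemma summable_cos (hm : 3 ≤ m) (θ : ℝ) :
    Summable (fun k : ℕ =>
      Real.cos (((k : ℝ) + 1) * θ) / ((m : ℝ) ^ 2 * ((k : ℝ) + 1) ^ 3 - 4 * ((k : ℝ) + 1))) := by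
  apply summable_bound (1 / 5)
  intro k
  have hd := d1_pos hm k
  rw [abs_div, abs_of_pos hd]
  calc |Real.cos (((k : ℝ) + 1) * θ)| / ((m : ℝ) ^ 2 * ((k : ℝ) + 1) ^ 3 - 4 * ((k : ℝ) + 1))
      ≤ 1 / (5 * ((k : ℝ) + 1) ^ 2) := by
        apply div_le_div₀ (by positivity) (Real.abs_cos_le_one _) (by positivity) (d1_ge hm k)
    _ = (1 / 5) / ((k : ℝ) + 1) ^ 2 := (div_div 1 5 _).symm

lemma summable_sinsin (hm : 3 ≤ m) (x y : ℝ) :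
    Summable (fun k : ℕ =>
      Real.sin (((k : ℝ) + 1) * x) * Real.sin (((k : ℝ) + 1) * y) /
        ((m : ℝ) ^ 2 * ((k : ℝ) + 1) ^ 3 - 4 * ((k : ℝ) + 1))) := by
  apply summable_bound (1 / 5)
  intro k
  have hd := d1_pos hm k
  rw [abs_div, abs_of_pos hd, abs_mul]
  calc |Real.sin (((k : ℝ) + 1) * x)| * |Real.sin (((k : ℝ) + 1) * y)| /
        ((m : ℝ) ^ 2 * ((k : ℝ) + 1) ^ 3 - 4 * ((k : ℝ) + 1))
      ≤ 1 / (5 * ((k : ℝ) + 1) ^ 2) := by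
        apply div_le_div₀ (by positivity) ?_ (by positivity) (d1_ge hm k)
        calc |Real.sin (((k : ℝ) + 1) * x)| * |Real.sin (((k : ℝ) + 1) * y)|
            ≤ 1 * 1 := by
              apply mul_le_mul (Real.abs_sin_le_one _) (Real.abs_sin_le_one _)
                (abs_nonneg _) (by norm_num)
          _ = 1 := by ring
    _ = (1 / 5) / ((k : ℝ) + 1) ^ 2 := (div_div 1 5 _).symm

lemma cos_lt_one' {θ : ℝ} (h0 : 0 < θ) (h1 : θ ≤ π) : Real.cos θ < 1 := by
  have := Real.strictAntiOn_cos (Set.mem_Icc.mpr ⟨le_rfl, Real.pi_pos.le⟩)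
    (Set.mem_Icc.mpr ⟨h0.le, h1⟩) h0
  rwa [Real.cos_zero] at this

lemma neg_one_lt_cos {θ : ℝ} (h0 : 0 ≤ θ) (h1 : θ < π) : -1 < Real.cos θ := by
  have := Real.strictAntiOn_cos (Set.mem_Icc.mpr ⟨h0, h1.le⟩)
    (Set.mem_Icc.mpr ⟨Real.pi_pos.le, le_rfl⟩) h1
  rwa [Real.cos_pi] at this

lemma abs_sin_nat_mul_le {θ : ℝ} (h0 : 0 ≤ θ) (h1 : θ ≤ π) :
    ∀ n : ℕ, |Real.sin ((n : ℝ) * θ)| ≤ (n : ℝ) * Real.sin θ := by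
  intro n
  induction n with
  | zero => simp
  | succ n ih =>
    have hs : 0 ≤ Real.sin θ := Real.sin_nonneg_of_nonneg_of_le_pi h0 h1
    have harg : ((n : ℝ) + 1) * θ = (n : ℝ) * θ + θ := by ring
    push_cast
    rw [harg, Real.sin_add]
    refine (abs_add_le _ _).trans ?_
    rw [abs_mul, abs_mul, abs_of_nonneg hs]
    have hc1 := Real.abs_cos_le_one ((n : ℝ) * θ)
    have hc2 := Real.abs_cos_le_one θ
    have hsn := abs_nonneg (Real.sin ((n : ℝ) * θ))
    nlinarith

lemma sin_succ_le {θ : ℝ} (h0 : 0 ≤ θ) (h1 : θ ≤ π) (n : ℕ) :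
    Real.sin (((n : ℝ) + 1) * θ) ≤ ((n : ℝ) + 1) * Real.sin θ := by
  have h := abs_sin_nat_mul_le h0 h1 (n + 1)
  push_cast at h
  exact (le_abs_self _).trans h

lemma sin_rec' (n : ℕ) (θ : ℝ) :
    Real.sin (((n : ℝ) + 1 + 1) * θ)
      = 2 * Real.cos θ * Real.sin (((n : ℝ) + 1) * θ) - Real.sin ((n : ℝ) * θ) := by
  have h1 : ((n : ℝ) + 1 + 1) * θ = ((n : ℝ) + 1) * θ + θ := by ring
  have h2 : ((n : ℝ)) * θ = ((n : ℝ) + 1) * θ - θ := by ring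
  rw [h1, h2, Real.sin_add, Real.sin_sub]
  ring

lemma dir_identity (θ : ℝ) (n : ℕ) :
    2 * (1 - Real.cos θ) * ∑ i ∈ range n, Real.sin (((i : ℝ) + 1) * θ)
      = Real.sin θ + Real.sin ((n : ℝ) * θ) - Real.sin (((n : ℝ) + 1) * θ) := by
  induction n with
  | zero => simp
  | succ n ih =>
    rw [Finset.sum_range_succ, mul_add, ih]
    push_cast
    linear_combination sin_rec' n θ

lemma fej_identity (θ : ℝ) (n : ℕ) :
    2 * (1 - Real.cos θ) * ∑ i ∈ range n, ((n : ℝ) - (i : ℝ)) * Real.sin (((i : ℝ) + 1) * θ)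
      = ((n : ℝ) + 1) * Real.sin θ - Real.sin (((n : ℝ) + 1) * θ) := by
  induction n with
  | zero => simp
  | succ n ih =>
    have hd := dir_identity θ (n + 1)
    push_cast at hd ⊢
    have hsplit : ∑ i ∈ range (n + 1), ((n : ℝ) + 1 - (i : ℝ)) * Real.sin (((i : ℝ) + 1) * θ)
        = (∑ i ∈ range n, ((n : ℝ) - (i : ℝ)) * Real.sin (((i : ℝ) + 1) * θ))
          + ∑ i ∈ range (n + 1), Real.sin (((i : ℝ) + 1) * θ) := by
      calc ∑ i ∈ range (n + 1), ((n : ℝ) + 1 - (i : ℝ)) * Real.sin (((i : ℝ) + 1) * θ)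
          = ∑ i ∈ range (n + 1),
              (((n : ℝ) - (i : ℝ)) * Real.sin (((i : ℝ) + 1) * θ)
                + Real.sin (((i : ℝ) + 1) * θ)) :=
            Finset.sum_congr rfl fun i _ => by ring
        _ = (∑ i ∈ range (n + 1), ((n : ℝ) - (i : ℝ)) * Real.sin (((i : ℝ) + 1) * θ))
              + ∑ i ∈ range (n + 1), Real.sin (((i : ℝ) + 1) * θ) := Finset.sum_add_distrib
        _ = (∑ i ∈ range n, ((n : ℝ) - (i : ℝ)) * Real.sin (((i : ℝ) + 1) * θ))
              + ∑ i ∈ range (n + 1), Real.sin (((i : ℝ) + 1) * θ) := by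
            rw [Finset.sum_range_succ]; simp
    rw [hsplit, mul_add, ih, hd]
    ring

lemma fejer_nonneg {θ : ℝ} (h0 : 0 < θ) (h1 : θ < π) (n : ℕ) :
    0 ≤ ∑ i ∈ range n, ((n : ℝ) - (i : ℝ)) * Real.sin (((i : ℝ) + 1) * θ) := by
  have hc : Real.cos θ < 1 := cos_lt_one' h0 h1.le
  have h2 : 0 < 2 * (1 - Real.cos θ) := by linarith
  have hR : 0 ≤ ((n : ℝ) + 1) * Real.sin θ - Real.sin (((n : ℝ) + 1) * θ) :=
    sub_nonneg.mpr (sin_succ_le h0.le h1.le n)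
  nlinarith [fej_identity θ n]


lemma Cc_key (hm : 3 ≤ m) (k : ℕ) : Cc m k =
    (2 * (m : ℝ) ^ 2 * ((m : ℝ) ^ 2 * (3 * ((k : ℝ) + 1) ^ 2 + 6 * ((k : ℝ) + 1) + 2) + 4)) /
      (((m : ℝ) ^ 2 * ((k : ℝ) + 1) ^ 2 - 4) * (((m : ℝ) ^ 2 * (((k : ℝ) + 1) + 1) ^ 2 - 4) *
        ((m : ℝ) ^ 2 * (((k : ℝ) + 1) + 2) ^ 2 - 4))) := by
  have ha := (d2r_pos hm (kr k)).ne'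
  have hb : ((m : ℝ) ^ 2 * (((k : ℝ) + 1) + 1) ^ 2 - 4) ≠ 0 := by
    have : (1 : ℝ) ≤ ((k : ℝ) + 1) + 1 := by have := kr k; linarith
    exact (d2r_pos hm this).ne'
  have hc : ((m : ℝ) ^ 2 * (((k : ℝ) + 1) + 2) ^ 2 - 4) ≠ 0 := by
    have : (1 : ℝ) ≤ ((k : ℝ) + 1) + 2 := by have := kr k; linarith
    exact (d2r_pos hm this).ne'
  unfold Cc Bc
  push_cast
  rw [show ((k : ℝ) + 2 + 1) = ((k : ℝ) + 1) + 2 by ring]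
  field_simp
  ring

set_option maxHeartbeats 1000000 in
lemma Cc_le_aux {M n : ℝ} (h9 : (9:ℝ) ≤ M ^ 2) (hn : 1 ≤ n) :
    (2 * M ^ 2 * (M ^ 2 * (3 * n ^ 2 + 6 * n + 2) + 4)) /
      ((M ^ 2 * n ^ 2 - 4) * ((M ^ 2 * (n + 1) ^ 2 - 4) * (M ^ 2 * (n + 2) ^ 2 - 4)))
      ≤ 6 / n ^ 4 := by
  have hn0 : (0:ℝ) < n := by linarith
  have h1 : (0:ℝ) < M ^ 2 * n ^ 2 - 4 := by nlinarith
  have h2 : (0:ℝ) < M ^ 2 * (n + 1) ^ 2 - 4 := by nlinarith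
  have h3 : (0:ℝ) < M ^ 2 * (n + 2) ^ 2 - 4 := by nlinarith
  have ha : (5 / 9) * (M ^ 2 * n ^ 2) ≤ M ^ 2 * n ^ 2 - 4 := by nlinarith
  have hb : (5 / 9) * (M ^ 2 * (n + 1) ^ 2) ≤ M ^ 2 * (n + 1) ^ 2 - 4 := by nlinarith
  have hc : (5 / 9) * (M ^ 2 * (n + 2) ^ 2) ≤ M ^ 2 * (n + 2) ^ 2 - 4 := by nlinarith
  rw [div_le_div_iff₀ (by positivity) (by positivity)]
  have hbc : (5 / 9) * (M ^ 2 * (n + 1) ^ 2) * ((5 / 9) * (M ^ 2 * (n + 2) ^ 2)) ≤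
      (M ^ 2 * (n + 1) ^ 2 - 4) * (M ^ 2 * (n + 2) ^ 2 - 4) :=
    mul_le_mul hb hc (by positivity) h2.le
  have habc : (5 / 9) * (M ^ 2 * n ^ 2) *
      ((5 / 9) * (M ^ 2 * (n + 1) ^ 2) * ((5 / 9) * (M ^ 2 * (n + 2) ^ 2))) ≤
      (M ^ 2 * n ^ 2 - 4) * ((M ^ 2 * (n + 1) ^ 2 - 4) * ((M ^ 2 * (n + 2) ^ 2 - 4))) :=
    mul_le_mul ha hbc (by positivity) h1.le
  have hNle : 2 * M ^ 2 * (M ^ 2 * (3 * n ^ 2 + 6 * n + 2) + 4)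
      ≤ 8 * M ^ 2 * M ^ 2 * (n + 1) ^ 2 := by
    nlinarith [sq_nonneg M, sq_nonneg n, mul_le_mul h9
      (show (5:ℝ) ≤ n ^ 2 + 2 * n + 2 by nlinarith) (by norm_num) (by positivity)]
  calc 2 * M ^ 2 * (M ^ 2 * (3 * n ^ 2 + 6 * n + 2) + 4) * n ^ 4
      ≤ 8 * M ^ 2 * M ^ 2 * (n + 1) ^ 2 * n ^ 4 :=
        mul_le_mul_of_nonneg_right hNle (by positivity)
    _ = (8 * n ^ 2) * (M ^ 2 * M ^ 2 * (n + 1) ^ 2 * n ^ 2) := by ring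
    _ ≤ ((750 / 729) * (M ^ 2 * (n + 2) ^ 2)) * (M ^ 2 * M ^ 2 * (n + 1) ^ 2 * n ^ 2) := by
        have key1 : 8 * n ^ 2 ≤ (750 / 729) * (M ^ 2 * (n + 2) ^ 2) := by
          nlinarith [mul_le_mul h9 (show n ^ 2 ≤ (n + 2) ^ 2 by nlinarith)
            (by positivity) (by nlinarith)]
        exact mul_le_mul_of_nonneg_right key1 (by positivity)
    _ = 6 * ((5 / 9) * (M ^ 2 * n ^ 2) *
          ((5 / 9) * (M ^ 2 * (n + 1) ^ 2) * ((5 / 9) * (M ^ 2 * (n + 2) ^ 2)))) := by ring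
    _ ≤ 6 * ((M ^ 2 * n ^ 2 - 4) * ((M ^ 2 * (n + 1) ^ 2 - 4) * ((M ^ 2 * (n + 2) ^ 2 - 4)))) :=
        mul_le_mul_of_nonneg_left habc (by norm_num)

lemma Cc_nonneg (hm : 3 ≤ m) (k : ℕ) : 0 ≤ Cc m k := by
  rw [Cc_key hm k]
  have hk := kr k
  have h1 := d2r_pos hm (kr k)
  have h2 : (0:ℝ) < (m : ℝ) ^ 2 * (((k : ℝ) + 1) + 1) ^ 2 - 4 := d2r_pos hm (by linarith)
  have h3 : (0:ℝ) < (m : ℝ) ^ 2 * (((k : ℝ) + 1) + 2) ^ 2 - 4 := d2r_pos hm (by linarith)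
  positivity

lemma Cc_le (hm : 3 ≤ m) (k : ℕ) : Cc m k ≤ 6 / ((k : ℝ) + 1) ^ 4 := by
  rw [Cc_key hm k]
  exact Cc_le_aux (hM hm) (kr k)


lemma tele (hm : 3 ≤ m) (j : ℕ) :
    HasSum (fun i : ℕ => ((i : ℝ) + 1) * Cc m (j + i)) (Bc m j) := by
  set G : ℕ → ℝ := fun i => ((i : ℝ) + 1) * (Bc m (j + i) - Bc m (j + i + 1)) + Bc m (j + i + 1)
    with hG
  have hstep : ∀ i : ℕ, ((i : ℝ) + 1) * Cc m (j + i) = G i - G (i + 1) := by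
    intro i
    simp only [hG]
    rw [show j + (i + 1) = j + i + 1 by omega, show j + i + 1 + 1 = j + i + 2 by omega]
    simp only [Cc]
    push_cast
    ring
  have hps : ∀ N, ∑ i ∈ range N, ((i : ℝ) + 1) * Cc m (j + i) = G 0 - G N := by
    intro N
    rw [Finset.sum_congr rfl fun i _ => hstep i]
    exact Finset.sum_range_sub' G N
  have hG0 : G 0 = Bc m j := by
    simp only [hG, Nat.add_zero, Nat.cast_zero]
    ring
  have hGnonneg : ∀ N, 0 ≤ G N := by
    intro N
    simp only [hG]
    have h1 := Bc_anti hm (j + N)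
    have h2 := (Bc_pos hm (j + N + 1)).le
    have h3 : (0:ℝ) ≤ (N : ℝ) + 1 := by positivity
    nlinarith
  have hGle : ∀ N : ℕ, G N ≤ 1 / (5 * ((N : ℝ) + 1)) + 1 / (5 * ((N : ℝ) + 1) ^ 2) := by
    intro N
    simp only [hG]
    have hb1 : Bc m (j + N) ≤ 1 / (5 * ((N : ℝ) + 1) ^ 2) := by
      refine le_trans (Bc_le hm (j + N)) (one_div_le_one_div_of_le (by positivity) ?_)
      have : (0:ℝ) ≤ (j : ℝ) := Nat.cast_nonneg j
      push_cast
      nlinarith [show (0:ℝ) ≤ (N:ℝ) from Nat.cast_nonneg N]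
    have hb2 : Bc m (j + N + 1) ≤ 1 / (5 * ((N : ℝ) + 1) ^ 2) := by
      refine le_trans (Bc_le hm (j + N + 1)) (one_div_le_one_div_of_le (by positivity) ?_)
      have : (0:ℝ) ≤ (j : ℝ) := Nat.cast_nonneg j
      push_cast
      nlinarith [show (0:ℝ) ≤ (N:ℝ) from Nat.cast_nonneg N]
    have hpos2 := (Bc_pos hm (j + N + 1)).le
    have hid : ((N : ℝ) + 1) * (1 / (5 * ((N : ℝ) + 1) ^ 2)) = 1 / (5 * ((N : ℝ) + 1)) := by
      have hN : ((N : ℝ) + 1) ≠ 0 := by positivity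
      field_simp
    have hmul := mul_le_mul_of_nonneg_left hb1 (show (0:ℝ) ≤ (N : ℝ) + 1 by positivity)
    nlinarith
  have h1 : Tendsto (fun N : ℕ => 1 / ((N : ℝ) + 1)) atTop (nhds 0) :=
    tendsto_one_div_add_atTop_nhds_zero_nat
  have h3 := (h1.const_mul (1/5 : ℝ)).add ((h1.mul h1).const_mul (1/5 : ℝ))
  norm_num at h3
  have hlim : Tendsto (fun N : ℕ => 1 / (5 * ((N : ℝ) + 1)) + 1 / (5 * ((N : ℝ) + 1) ^ 2))
      atTop (nhds 0) := by
    refine h3.congr fun N => ?_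
    have hN : ((N:ℝ) + 1) ≠ 0 := by positivity
    field_simp
  have hzero : Tendsto G atTop (nhds 0) :=
    tendsto_of_tendsto_of_tendsto_of_le_of_le tendsto_const_nhds hlim hGnonneg hGle
  rw [hasSum_iff_tendsto_nat_of_nonneg
    (fun i => mul_nonneg (by positivity) (Cc_nonneg hm (j + i)))]
  have hfin : Tendsto (fun N : ℕ => G 0 - G N) atTop (nhds (G 0 - 0)) :=
    tendsto_const_nhds.sub hzero
  rw [sub_zero] at hfin
  have hfin2 := Tendsto.congr (fun N => (hps N).symm) hfin
  rwa [hG0] at hfin2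

lemma hWrow (hm : 3 ≤ m) (j : ℕ) :
    HasSum (fun k : ℕ => if j ≤ k then ((k : ℝ) - (j : ℝ) + 1) * Cc m k else 0) (Bc m j) := by
  have h0 := tele hm j
  have funeq : (fun i : ℕ => ((i : ℝ) + 1) * Cc m (j + i))
      = fun i : ℕ => if j ≤ i + j then (((i + j : ℕ) : ℝ) - (j : ℝ) + 1) * Cc m (i + j) else 0 := by
    funext i
    rw [if_pos (Nat.le_add_left j i), Nat.add_comm i j]
    push_cast
    ring
  rw [funeq] at h0
  have h2 := (hasSum_nat_add_iff
    (f := fun k : ℕ => if j ≤ k then ((k : ℝ) - (j : ℝ) + 1) * Cc m k else 0) j).mp h0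
  have hz : ∑ i ∈ range j, (if j ≤ i then ((i : ℝ) - (j : ℝ) + 1) * Cc m i else 0) = 0 :=
    Finset.sum_eq_zero fun i hi => if_neg (by have := Finset.mem_range.mp hi; omega)
  rwa [hz, add_zero] at h2

lemma T_nonneg (hm : 3 ≤ m) {θ : ℝ} (hθ0 : 0 < θ) (hθπ : θ < π) :
    0 ≤ ∑' j : ℕ, Real.sin (((j : ℝ) + 1) * θ) * Bc m j := by
  classical
  set W : ℕ → ℕ → ℝ := fun j k => if j ≤ k then ((k : ℝ) - (j : ℝ) + 1) * Cc m k else 0 with hWdef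
  have hW0 : ∀ (j k : ℕ), 0 ≤ W j k := by
    intro j k
    by_cases h : j ≤ k
    · simp only [hWdef, if_pos h]
      apply mul_nonneg ?_ (Cc_nonneg hm k)
      have : (j : ℝ) ≤ (k : ℝ) := by exact_mod_cast h
      linarith
    · simp [hWdef, if_neg h]
  have hrow : ∀ j : ℕ, HasSum (W j) (Bc m j) := fun j => hWrow hm j
  have hWabs : ∀ (j k : ℕ), |Real.sin (((j : ℝ) + 1) * θ) * W j k| ≤ W j k := by
    intro j k
    rw [abs_mul, abs_of_nonneg (hW0 j k)]
    calc |Real.sin (((j : ℝ) + 1) * θ)| * W j k ≤ 1 * W j k :=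
          mul_le_mul_of_nonneg_right (Real.abs_sin_le_one _) (hW0 j k)
      _ = W j k := one_mul _
  have hrowsum : ∀ j : ℕ, Summable (fun k => |Real.sin (((j : ℝ) + 1) * θ) * W j k|) := by
    intro j
    exact Summable.of_nonneg_of_le (fun k => abs_nonneg _) (hWabs j) (hrow j).summable
  have habs : Summable (fun p : ℕ × ℕ => |Real.sin (((p.1 : ℝ) + 1) * θ) * W p.1 p.2|) := by
    rw [summable_prod_of_nonneg (fun p => abs_nonneg _)]
    refine ⟨fun j => hrowsum j, ?_⟩
    apply Summable.of_nonneg_of_le (fun j => tsum_nonneg fun k => abs_nonneg _) ?_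
      (summable_Bc hm)
    intro j
    calc ∑' k : ℕ, |Real.sin (((j : ℝ) + 1) * θ) * W j k| ≤ ∑' k : ℕ, W j k :=
          Summable.tsum_le_tsum (hWabs j) (hrowsum j) (hrow j).summable
      _ = Bc m j := (hrow j).tsum_eq
  have hV : Summable (Function.uncurry fun (j k : ℕ) => Real.sin (((j : ℝ) + 1) * θ) * W j k) := by
    apply Summable.of_norm
    simp only [Function.uncurry, Real.norm_eq_abs]
    exact habs
  have h1 : ∀ j : ℕ, Real.sin (((j : ℝ) + 1) * θ) * Bc m j
      = ∑' k : ℕ, Real.sin (((j : ℝ) + 1) * θ) * W j k := by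
    intro j
    rw [tsum_mul_left, (hrow j).tsum_eq]
  rw [tsum_congr h1]
  rw [← Summable.tsum_comm' hV (fun j : ℕ => (hrow j).summable.mul_left _)
    (fun k => summable_of_ne_finset_zero (s := range (k + 1)) fun j hj => by
      have hk : k + 1 ≤ j := by simpa [Finset.mem_range, not_lt] using hj
      simp [hWdef, if_neg (show ¬ j ≤ k by omega)])]
  apply tsum_nonneg
  intro k
  have hin : ∑' j : ℕ, Real.sin (((j : ℝ) + 1) * θ) * W j k
      = ∑ j ∈ range (k + 1), Real.sin (((j : ℝ) + 1) * θ) * W j k := by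
    apply tsum_eq_sum
    intro j hj
    have hk : k + 1 ≤ j := by simpa [Finset.mem_range, not_lt] using hj
    simp [hWdef, if_neg (show ¬ j ≤ k by omega)]
  rw [hin]
  have hfac : ∑ j ∈ range (k + 1), Real.sin (((j : ℝ) + 1) * θ) * W j k
      = Cc m k * ∑ j ∈ range (k + 1), (((k : ℝ) + 1) - (j : ℝ)) * Real.sin (((j : ℝ) + 1) * θ) := by
    rw [Finset.mul_sum]
    apply Finset.sum_congr rfl
    intro j hj
    have : j ≤ k := by have := Finset.mem_range.mp hj; omega
    simp only [hWdef, if_pos this]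
    ring
  rw [hfac]
  apply mul_nonneg (Cc_nonneg hm k)
  have hfej := fejer_nonneg hθ0 hθπ (k + 1)
  push_cast at hfej
  exact hfej


lemma hasDerivAt_Fm (hm : 3 ≤ m) {θ : ℝ} (hθ : 1 - Real.cos θ ≠ 0) :
    HasDerivAt (Fm m)
      (-(1 / (2 * π)) * (Real.sin θ / (1 - Real.cos θ))
        + 3 / π * ∑' k : ℕ, -(Real.sin (((k : ℝ) + 1) * θ) * Bc m k)) θ := by
  have hlog : HasDerivAt (fun t => Real.log (1 - Real.cos t))
      (Real.sin θ / (1 - Real.cos θ)) θ := by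
    have h1 : HasDerivAt (fun t : ℝ => 1 - Real.cos t) (Real.sin θ) θ := by
      simpa using (Real.hasDerivAt_cos θ).const_sub 1
    simpa using h1.log hθ
  have hg : ∀ (n : ℕ) (y : ℝ), HasDerivAt
      (fun t : ℝ => Real.cos (((n : ℝ) + 1) * t) /
        ((m : ℝ) ^ 2 * ((n : ℝ) + 1) ^ 3 - 4 * ((n : ℝ) + 1)))
      (-(Real.sin (((n : ℝ) + 1) * y) * Bc m n)) y := by
    intro n y
    have hid : HasDerivAt (fun t : ℝ => ((n : ℝ) + 1) * t) ((n : ℝ) + 1) y := by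
      simpa using (hasDerivAt_id y).const_mul ((n : ℝ) + 1)
    have h3 := hid.cos.div_const ((m : ℝ) ^ 2 * ((n : ℝ) + 1) ^ 3 - 4 * ((n : ℝ) + 1))
    refine h3.congr_deriv ?_
    have hd2 : ((m : ℝ) ^ 2 * ((n : ℝ) + 1) ^ 2 - 4) ≠ 0 := (d2r_pos hm (kr n)).ne'
    have hn1 : ((n : ℝ) + 1) ≠ 0 := by positivity
    rw [d1_eq]
    simp only [Bc]
    field_simp
  have hg' : ∀ (n : ℕ) (y : ℝ), ‖-(Real.sin (((n : ℝ) + 1) * y) * Bc m n)‖ ≤ Bc m n := by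
    intro n y
    rw [norm_neg, norm_mul, Real.norm_eq_abs, Real.norm_eq_abs, abs_of_pos (Bc_pos hm n)]
    calc |Real.sin (((n : ℝ) + 1) * y)| * Bc m n ≤ 1 * Bc m n :=
          mul_le_mul_of_nonneg_right (Real.abs_sin_le_one _) (Bc_pos hm n).le
      _ = Bc m n := one_mul _
  have hseries := hasDerivAt_tsum (summable_Bc hm) hg hg' (summable_cos hm θ) θ
  have hfin := (hlog.const_mul (-(1 / (2 * π)))).add (hseries.const_mul (3 / π))
  exact hfin

lemma Fm_deriv_neg (hm : 3 ≤ m) {θ : ℝ} (hθ0 : 0 < θ) (hθπ : θ < π) :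
    deriv (Fm m) θ < 0 := by
  have hc : Real.cos θ < 1 := cos_lt_one' hθ0 hθπ.le
  have hden : (0:ℝ) < 1 - Real.cos θ := by linarith
  rw [(hasDerivAt_Fm hm hden.ne').deriv]
  have hT := T_nonneg hm hθ0 hθπ
  have hsin : 0 < Real.sin θ := Real.sin_pos_of_pos_of_lt_pi hθ0 hθπ
  have hπ := Real.pi_pos
  rw [tsum_neg]
  have h1 : 0 < 1 / (2 * π) * (Real.sin θ / (1 - Real.cos θ)) := by positivity
  have h2 : 0 ≤ 3 / π * (∑' j : ℕ, Real.sin (((j : ℝ) + 1) * θ) * Bc m j) :=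
    mul_nonneg (by positivity) hT
  nlinarith

lemma Fm_strictAntiOn (hm : 3 ≤ m) : StrictAntiOn (Fm m) (Ioc 0 π) := by
  apply strictAntiOn_of_deriv_neg (convex_Ioc 0 π)
  · intro x hx
    have hc : Real.cos x < 1 := cos_lt_one' hx.1 hx.2
    exact ((hasDerivAt_Fm hm (by linarith : (1:ℝ) - Real.cos x ≠ 0)).continuousAt).continuousWithinAt
  · intro x hx
    rw [interior_Ioc] at hx
    exact Fm_deriv_neg hm hx.1 hx.2

lemma Fm_neg (m : ℕ) (θ : ℝ) : Fm m (-θ) = Fm m θ := by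
  unfold Fm
  have h : ∀ k : ℕ, Real.cos (((k : ℝ) + 1) * -θ) /
        ((m : ℝ) ^ 2 * ((k : ℝ) + 1) ^ 3 - 4 * ((k : ℝ) + 1))
      = Real.cos (((k : ℝ) + 1) * θ) /
        ((m : ℝ) ^ 2 * ((k : ℝ) + 1) ^ 3 - 4 * ((k : ℝ) + 1)) := fun k => by
    rw [show ((k : ℝ) + 1) * -θ = -(((k : ℝ) + 1) * θ) by ring, Real.cos_neg]
  rw [Real.cos_neg, tsum_congr h]

lemma Fm_reflect (m : ℕ) (θ : ℝ) : Fm m (2 * π - θ) = Fm m θ := by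
  unfold Fm
  have h : ∀ k : ℕ, Real.cos (((k : ℝ) + 1) * (2 * π - θ)) /
        ((m : ℝ) ^ 2 * ((k : ℝ) + 1) ^ 3 - 4 * ((k : ℝ) + 1))
      = Real.cos (((k : ℝ) + 1) * θ) /
        ((m : ℝ) ^ 2 * ((k : ℝ) + 1) ^ 3 - 4 * ((k : ℝ) + 1)) := fun k => by
    rw [show ((k : ℝ) + 1) * (2 * π - θ) = ((k + 1 : ℕ) : ℝ) * (2 * π) - ((k : ℝ) + 1) * θ by
      push_cast; ring, Real.cos_nat_mul_two_pi_sub]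
  rw [Real.cos_two_pi_sub, tsum_congr h]

lemma Kker_eq (hm : 3 ≤ m) (x y : ℝ) (h1 : 1 - Real.cos (x - y) ≠ 0)
    (h2 : 1 - Real.cos (x + y) ≠ 0) :
    Kker m x y = Fm m (x - y) - Fm m (x + y) := by
  have hs1 := summable_cos hm (x - y)
  have hs2 := summable_cos hm (x + y)
  have hsum : (∑' k : ℕ, Real.sin (((k : ℝ) + 1) * x) * Real.sin (((k : ℝ) + 1) * y) /
        ((m : ℝ) ^ 2 * ((k : ℝ) + 1) ^ 3 - 4 * ((k : ℝ) + 1)))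
      = (1 / 2) * ∑' k : ℕ,
          (Real.cos (((k : ℝ) + 1) * (x - y)) /
              ((m : ℝ) ^ 2 * ((k : ℝ) + 1) ^ 3 - 4 * ((k : ℝ) + 1))
            - Real.cos (((k : ℝ) + 1) * (x + y)) /
              ((m : ℝ) ^ 2 * ((k : ℝ) + 1) ^ 3 - 4 * ((k : ℝ) + 1))) := by
    rw [← tsum_mul_left]
    apply tsum_congr
    intro k
    rw [show ((k : ℝ) + 1) * (x - y) = ((k : ℝ) + 1) * x - ((k : ℝ) + 1) * y by ring,
      show ((k : ℝ) + 1) * (x + y) = ((k : ℝ) + 1) * x + ((k : ℝ) + 1) * y by ring,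
      Real.cos_sub, Real.cos_add]
    ring
  unfold Kker Fm
  rw [hsum, Summable.tsum_sub hs1 hs2, Real.log_div h2 h1]
  ring

end KkerAux

open KkerAux in
/-- For `m ≥ 3`: `K_m(x,y) ≥ 0` for all `x, y ∈ [0,π]` with `x ≠ y`; moreover
`K_m(x,y) > 0` whenever `x ∈ (0,π)`, `y ∈ (0,π)`, `y ≠ x` and `y ≠ π − x`; and
`K_m(0,y) = K_m(π,y) = 0` for all `y ∈ (0,π)`. -/
theorem Kker_nonneg_pos_zero (m : ℕ) (hm : 3 ≤ m) :
    (∀ x ∈ Set.Icc (0:ℝ) Real.pi, ∀ y ∈ Set.Icc (0:ℝ) Real.pi, x ≠ y → 0 ≤ Kker m x y) ∧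
    (∀ x ∈ Set.Ioo (0:ℝ) Real.pi, ∀ y ∈ Set.Ioo (0:ℝ) Real.pi,
      y ≠ x → y ≠ Real.pi - x → 0 < Kker m x y) ∧
    (∀ y ∈ Set.Ioo (0:ℝ) Real.pi, Kker m 0 y = 0 ∧ Kker m Real.pi y = 0) := by
  have hπ := Real.pi_pos
  refine ⟨?_, ?_, ?_⟩
  · -- nonnegativity
    intro x hx y hy hxy
    obtain ⟨hx0, hxπ⟩ := hx
    obtain ⟨hy0, hyπ⟩ := hy
    have hu0 : 0 < |x - y| := abs_pos.mpr (sub_ne_zero.mpr hxy)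
    have huπ : |x - y| ≤ π := abs_le.mpr ⟨by linarith, by linarith⟩
    have hvposA : 0 < x + y := by
      by_contra h
      push_neg at h
      have hx' : x = 0 := le_antisymm (by linarith) hx0
      have hy' : y = 0 := le_antisymm (by linarith) hy0
      exact hxy (hx'.trans hy'.symm)
    have hvposB : x + y < 2 * π := by
      by_contra h
      push_neg at h
      have hx' : x = π := le_antisymm hxπ (by linarith)
      have hy' : y = π := le_antisymm hyπ (by linarith)
      exact hxy (hx'.trans hy'.symm)
    set v := min (x + y) (2 * π - (x + y)) with hv
    have hv0 : 0 < v := lt_min hvposA (by linarith)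
    have hvπ : v ≤ π := by
      rcases le_total (x + y) (2 * π - (x + y)) with h | h
      · rw [hv, min_eq_left h]; linarith
      · rw [hv, min_eq_right h]; linarith
    have huv : |x - y| ≤ v :=
      le_min (abs_le.mpr ⟨by linarith, by linarith⟩) (abs_le.mpr ⟨by linarith, by linarith⟩)
    have hcu : Real.cos (x - y) < 1 := by
      have h := cos_lt_one' hu0 huπ
      rwa [Real.cos_abs] at h
    have hcv : Real.cos (x + y) < 1 := by
      rcases le_total (x + y) (2 * π - (x + y)) with h | h
      · have h2 := cos_lt_one' hv0 hvπ
        rwa [hv, min_eq_left h] at h2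
      · have h2 := cos_lt_one' hv0 hvπ
        rw [hv, min_eq_right h, Real.cos_two_pi_sub] at h2
        exact h2
    have hFu : Fm m (x - y) = Fm m |x - y| := by
      rcases le_total y x with h | h
      · rw [abs_of_nonneg (by linarith)]
      · rw [abs_of_nonpos (by linarith)]
        exact (Fm_neg m (x - y)).symm
    have hFv : Fm m (x + y) = Fm m v := by
      rcases le_total (x + y) (2 * π - (x + y)) with h | h
      · rw [hv, min_eq_left h]
      · rw [hv, min_eq_right h]
        exact (Fm_reflect m (x + y)).symm
    rw [Kker_eq hm x y (by linarith : (1:ℝ) - Real.cos (x - y) ≠ 0)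
      (by linarith : (1:ℝ) - Real.cos (x + y) ≠ 0), hFu, hFv]
    have hmono := (Fm_strictAntiOn hm).antitoneOn (Set.mem_Ioc.mpr ⟨hu0, huπ⟩)
      (Set.mem_Ioc.mpr ⟨hv0, hvπ⟩) huv
    linarith
  · -- strict positivity
    intro x hx y hy hyx hyr
    obtain ⟨hx0, hxπ⟩ := hx
    obtain ⟨hy0, hyπ⟩ := hy
    have hxy : x ≠ y := fun h => hyx h.symm
    have hu0 : 0 < |x - y| := abs_pos.mpr (sub_ne_zero.mpr hxy)
    have huπ : |x - y| ≤ π := abs_le.mpr ⟨by linarith, by linarith⟩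
    set v := min (x + y) (2 * π - (x + y)) with hv
    have hv0 : 0 < v := lt_min (by linarith) (by linarith)
    have hvπ : v ≤ π := by
      rcases le_total (x + y) (2 * π - (x + y)) with h | h
      · rw [hv, min_eq_left h]; linarith
      · rw [hv, min_eq_right h]; linarith
    have huv : |x - y| < v :=
      lt_min (abs_lt.mpr ⟨by linarith, by linarith⟩) (abs_lt.mpr ⟨by linarith, by linarith⟩)
    have hcu : Real.cos (x - y) < 1 := by
      have h := cos_lt_one' hu0 huπ
      rwa [Real.cos_abs] at h
    have hcv : Real.cos (x + y) < 1 := by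
      rcases le_total (x + y) (2 * π - (x + y)) with h | h
      · have h2 := cos_lt_one' hv0 hvπ
        rwa [hv, min_eq_left h] at h2
      · have h2 := cos_lt_one' hv0 hvπ
        rw [hv, min_eq_right h, Real.cos_two_pi_sub] at h2
        exact h2
    have hFu : Fm m (x - y) = Fm m |x - y| := by
      rcases le_total y x with h | h
      · rw [abs_of_nonneg (by linarith)]
      · rw [abs_of_nonpos (by linarith)]
        exact (Fm_neg m (x - y)).symm
    have hFv : Fm m (x + y) = Fm m v := by
      rcases le_total (x + y) (2 * π - (x + y)) with h | h
      · rw [hv, min_eq_left h]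
      · rw [hv, min_eq_right h]
        exact (Fm_reflect m (x + y)).symm
    rw [Kker_eq hm x y (by linarith : (1:ℝ) - Real.cos (x - y) ≠ 0)
      (by linarith : (1:ℝ) - Real.cos (x + y) ≠ 0), hFu, hFv]
    have hmono := (Fm_strictAntiOn hm) (Set.mem_Ioc.mpr ⟨hu0, huπ⟩)
      (Set.mem_Ioc.mpr ⟨hv0, hvπ⟩) huv
    linarith
  · -- boundary zeros
    intro y hy
    obtain ⟨hy0, hyπ⟩ := hy
    constructor
    · unfold Kker
      have hcy : Real.cos y < 1 := cos_lt_one' hy0 hyπ.le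
      rw [show (0:ℝ) + y = y by ring, show (0:ℝ) - y = -y by ring, Real.cos_neg,
        div_self (by linarith : (1:ℝ) - Real.cos y ≠ 0), Real.log_one]
      have hz : ∀ k : ℕ, Real.sin (((k : ℝ) + 1) * 0) * Real.sin (((k : ℝ) + 1) * y) /
          ((m : ℝ) ^ 2 * ((k : ℝ) + 1) ^ 3 - 4 * ((k : ℝ) + 1)) = 0 := fun k => by
        rw [mul_zero, Real.sin_zero, zero_mul, zero_div]
      rw [tsum_congr hz, tsum_zero]
      ring
    · unfold Kker
      have hcy : -1 < Real.cos y := neg_one_lt_cos hy0.le hyπ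
      have hpy : Real.cos (π + y) = Real.cos (π - y) := by
        rw [Real.cos_add, Real.cos_sub]
        simp
      have hne : (1:ℝ) - Real.cos (π - y) ≠ 0 := by
        have h : (0:ℝ) < 1 - Real.cos (π - y) := by
          rw [Real.cos_pi_sub]; linarith
        exact h.ne'
      rw [hpy, div_self hne, Real.log_one]
      have hz : ∀ k : ℕ, Real.sin (((k : ℝ) + 1) * π) * Real.sin (((k : ℝ) + 1) * y) /
          ((m : ℝ) ^ 2 * ((k : ℝ) + 1) ^ 3 - 4 * ((k : ℝ) + 1)) = 0 := fun k => by
        rw [show ((k : ℝ) + 1) * π = ((k + 1 : ℕ) : ℝ) * π by push_cast; ring,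
          Real.sin_nat_mul_pi, zero_mul, zero_div]
      rw [tsum_congr hz, tsum_zero]
      ring
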